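/- arXiv:2412.08355 — 2 statements merged into one kernel-verified Lean document; each statement's English description precedes it below -/
import Mathlib

section
/- (Single-step energy estimate.) Let M be an N×N real symmetric positive definite matrix, A an N×N real symmetric positive semidefinite matrix, τ > 0, and V_H ⊆ ℝᴺ a linear subspace. Write m(u,v) = uᵀ M v, a(u,v) = uᵀ A v, ‖u‖_M² = m(u,u), ‖u‖_A² = a(u,u). Suppose e^n, e^{n−1} ∈ ℝᴺ satisfy the error equation m(e^n − e^{n−1}, v) + τ a(e^n, v) = 0 for all v ∈ V_H, and suppose T^n ∈ ℝᴺ and w^n ∈ V_H satisfy e^n − (T^n − w^n) ∈ V_H and a(T^n − w^n, v) = 0 for all v ∈ V_H (elliptic projection). Then (1/2)‖e^n‖_M² + (τ/2)‖e^n‖_A² ≤ 2‖e^{n−1}‖_M² + (5/4)‖T^n − w^n‖_M² + (τ/2)‖T^n − w^n‖_A². -/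
open Matrix


lemma young_aux {N : ℕ} {M : Matrix (Fin N) (Fin N) ℝ} (hM : M.PosSemidef)
    (x y : Fin N → ℝ) (c : ℝ) (hc : 0 < c) :
    x ⬝ᵥ M.mulVec y + y ⬝ᵥ M.mulVec x ≤
      c * (x ⬝ᵥ M.mulVec x) + (1 / c) * (y ⬝ᵥ M.mulVec y) := by
  have h := hM.dotProduct_mulVec_nonneg (c • x - y)
  simp only [star_trivial, mulVec_sub, mulVec_smul, dotProduct_sub, sub_dotProduct,
    dotProduct_smul, smul_dotProduct, smul_eq_mul] at h
  have e : (1 / c) * (y ⬝ᵥ M.mulVec y) * c = y ⬝ᵥ M.mulVec y := by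
    field_simp
  nlinarith [h, hc, e]

lemma sym_aux {N : ℕ} {M : Matrix (Fin N) (Fin N) ℝ} (hM : M.IsHermitian)
    (x y : Fin N → ℝ) : x ⬝ᵥ M.mulVec y = y ⬝ᵥ M.mulVec x := by
  have hMT : Mᵀ = M := by
    ext i j; simpa using hM.apply i j
  rw [dotProduct_mulVec, ← mulVec_transpose, hMT, dotProduct_comm]


/-- Single-step energy estimate: if the errors `e^n, e^{n−1}` satisfy the error equation
tested against `VH`, `e^n − (T^n − w^n) ∈ VH`, and `w^n ∈ VH` is the elliptic projection of
`T^n`, then `(1/2)‖e^n‖_M² + (τ/2)‖e^n‖_A² ≤ 2‖e^{n−1}‖_M² + (5/4)‖T^n − w^n‖_M²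
+ (τ/2)‖T^n − w^n‖_A²`. -/
theorem stmt_7 {N : ℕ} (M A : Matrix (Fin N) (Fin N) ℝ)
    (hM : M.PosDef) (hA : A.PosSemidef) (τ : ℝ) (hτ : 0 < τ)
    (VH : Submodule ℝ (Fin N → ℝ))
    (en enm1 Tn wn : Fin N → ℝ)
    (herr : ∀ v ∈ VH, (en - enm1) ⬝ᵥ M.mulVec v + τ * (en ⬝ᵥ A.mulVec v) = 0)
    (hmem : en - (Tn - wn) ∈ VH) (hwn : wn ∈ VH)
    (hell : ∀ v ∈ VH, (Tn - wn) ⬝ᵥ A.mulVec v = 0) :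
    (1 / 2) * (en ⬝ᵥ M.mulVec en) + (τ / 2) * (en ⬝ᵥ A.mulVec en) ≤
      2 * (enm1 ⬝ᵥ M.mulVec enm1)
        + (5 / 4) * ((Tn - wn) ⬝ᵥ M.mulVec (Tn - wn))
        + (τ / 2) * ((Tn - wn) ⬝ᵥ A.mulVec (Tn - wn)) := by
  set r := Tn - wn with hr
  have E1 := herr _ hmem
  have E2 := hell _ hmem
  simp only [mulVec_sub, dotProduct_sub, sub_dotProduct] at E1 E2 ⊢
  -- symmetry facts
  have sA := sym_aux hA.1 en r
  have sM1 := sym_aux hM.1 en r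
  have sM2 := sym_aux hM.1 enm1 en
  have sM3 := sym_aux hM.1 enm1 r
  -- a(en, r) = a(r, r)
  have hX : en ⬝ᵥ A.mulVec r = r ⬝ᵥ A.mulVec r := by linarith [sA, E2]
  -- 0 ≤ a(q,q) gives a(r,r) ≤ a(en,en)
  have aq := hA.dotProduct_mulVec_nonneg (en - r)
  simp only [star_trivial, mulVec_sub, dotProduct_sub, sub_dotProduct] at aq
  have hge : r ⬝ᵥ A.mulVec r ≤ en ⬝ᵥ A.mulVec en := by linarith [sA, E2, aq]
  -- Young inequalities
  have Y1 := young_aux hM.posSemidef en r (1/2) (by norm_num)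
  have Y2 := young_aux hM.posSemidef enm1 en 2 (by norm_num)
  have Y3 := young_aux hM.posSemidef enm1 (-r) 2 (by norm_num)
  simp only [mulVec_neg, dotProduct_neg, neg_dotProduct] at Y3
  -- key combination
  have pos : 0 ≤ τ * (en ⬝ᵥ A.mulVec en) - τ * (r ⬝ᵥ A.mulVec r) := by
    nlinarith [hge, hτ.le]
  have key : τ * (en ⬝ᵥ A.mulVec en) - τ * (r ⬝ᵥ A.mulVec r)
      = en ⬝ᵥ M.mulVec r + enm1 ⬝ᵥ M.mulVec en - enm1 ⬝ᵥ M.mulVec r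
        - en ⬝ᵥ M.mulVec en := by
    linear_combination E1 + τ * hX
  norm_num at Y1 Y2 Y3
  linarith [Y1, Y2, Y3, pos, key, sM1, sM2, sM3]
end

section
/- (Two-grid condition number bound from the weak approximation property.) Let M and A be N×N real symmetric positive semidefinite matrices, τ > 0, and Q = (1/τ) M + A. Let D_M and D_A be N×N diagonal matrices with positive diagonal entries such that (D_M)_{ii} ≤ C (D_A)_{ii} for all i for some constant C > 0, and set D_Q = (1/τ) D_M + D_A. Let Π : ℝᴺ → ℝᴺ be a linear map satisfying the weak approximation property ‖v − Π v‖_{D_A}² ≤ K₀ vᵀ A v for all v ∈ ℝᴺ, where K₀ > 0. Then for all v ∈ ℝᴺ: ‖v − Π v‖_{D_Q}² ≤ (1 + C/τ) K₀ · vᵀ Q v. -/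
open Matrix

/-- Two-grid condition number bound from the weak approximation property: with
`Q = (1/τ) M + A`, positive diagonal matrices `D_M = diagonal dM`, `D_A = diagonal dA`
satisfying `dM i ≤ C dA i`, `D_Q = (1/τ) D_M + D_A`, and a linear interpolation `Π`
satisfying `‖v − Pi v‖_{D_A}² ≤ K₀ vᵀ A v`, one has
`‖v − Pi v‖_{D_Q}² ≤ (1 + C/τ) K₀ vᵀ Q v` for all `v`. -/
theorem stmt_12 {N : ℕ} (M A : Matrix (Fin N) (Fin N) ℝ)
    (hM : M.PosSemidef) (hA : A.PosSemidef) (τ : ℝ) (hτ : 0 < τ)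
    (dM dA : Fin N → ℝ) (hdM : ∀ i, 0 < dM i) (hdA : ∀ i, 0 < dA i)
    (C : ℝ) (hC : 0 < C) (hCd : ∀ i, dM i ≤ C * dA i)
    (Pi : (Fin N → ℝ) →ₗ[ℝ] (Fin N → ℝ))
    (K0 : ℝ) (hK0 : 0 < K0)
    (hweak : ∀ v : Fin N → ℝ,
      (v - Pi v) ⬝ᵥ (Matrix.diagonal dA).mulVec (v - Pi v) ≤ K0 * (v ⬝ᵥ A.mulVec v)) :
    ∀ v : Fin N → ℝ,
      (v - Pi v) ⬝ᵥ (Matrix.diagonal (fun i => (1 / τ) * dM i + dA i)).mulVec (v - Pi v) ≤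
        (1 + C / τ) * K0 * (v ⬝ᵥ ((1 / τ) • M + A).mulVec v) := by
  intro v
  set w := v - Pi v with hw
  have hdiag : ∀ (d : Fin N → ℝ),
      w ⬝ᵥ (Matrix.diagonal d).mulVec w = ∑ i, d i * (w i)^2 := by
    intro d
    simp [dotProduct, Matrix.mulVec_diagonal]
    ring_nf
    exact Finset.sum_congr rfl (fun i _ => by ring)
  -- step 1: LHS ≤ (1 + C/τ) * ‖w‖_{D_A}²
  have h1 : w ⬝ᵥ (Matrix.diagonal (fun i => (1 / τ) * dM i + dA i)).mulVec w
      ≤ (1 + C / τ) * (w ⬝ᵥ (Matrix.diagonal dA).mulVec w) := by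
    rw [hdiag, hdiag, Finset.mul_sum]
    apply Finset.sum_le_sum
    intro i _
    have hsq : (0:ℝ) ≤ (w i)^2 := sq_nonneg _
    have hstep : (1 / τ) * dM i ≤ (C / τ) * dA i := by
      rw [div_mul_eq_mul_div, div_mul_eq_mul_div, div_le_div_iff₀ hτ hτ]
      nlinarith [hCd i]
    have : (1 / τ) * dM i + dA i ≤ (1 + C / τ) * dA i := by
      have : (1 + C / τ) * dA i = dA i + (C / τ) * dA i := by ring
      linarith
    nlinarith
  have h2 := hweak v
  -- step 3: vᵀAv ≤ vᵀQv
  have h3 : v ⬝ᵥ A.mulVec v ≤ v ⬝ᵥ ((1 / τ) • M + A).mulVec v := by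
    have hMv : 0 ≤ v ⬝ᵥ M.mulVec v := by simpa using hM.dotProduct_mulVec_nonneg v
    rw [Matrix.add_mulVec, dotProduct_add, Matrix.smul_mulVec, dotProduct_smul]
    have h0 : 0 ≤ (1 / τ) * (v ⬝ᵥ M.mulVec v) := by positivity
    simp only [smul_eq_mul]
    linarith
  have hpos : (0:ℝ) ≤ 1 + C / τ := by positivity
  have hQ : 0 ≤ v ⬝ᵥ ((1 / τ) • M + A).mulVec v := by
    have hAv : 0 ≤ v ⬝ᵥ A.mulVec v := by simpa using hA.dotProduct_mulVec_nonneg v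
    linarith
  calc w ⬝ᵥ (Matrix.diagonal (fun i => (1 / τ) * dM i + dA i)).mulVec w
      ≤ (1 + C / τ) * (w ⬝ᵥ (Matrix.diagonal dA).mulVec w) := h1
    _ ≤ (1 + C / τ) * (K0 * (v ⬝ᵥ A.mulVec v)) := by
        exact mul_le_mul_of_nonneg_left h2 hpos
    _ ≤ (1 + C / τ) * K0 * (v ⬝ᵥ ((1 / τ) • M + A).mulVec v) := by
        rw [mul_assoc]
        exact mul_le_mul_of_nonneg_left (mul_le_mul_of_nonneg_left h3 hK0.le) hpos
end
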